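/- arXiv:2601.00727 — 13 statements merged into one kernel-verified Lean document; each statement's English description precedes it below -/
import Mathlib

section
/- For q in the interval [(√5−1)/2, √2/2], the inequality (1 − q²/(1−q⁴))·q² ≤ 1 − q holds. -/
theorem stmt_0 (q : ℝ) (h1 : (Real.sqrt 5 - 1) / 2 ≤ q) (h2 : q ≤ Real.sqrt 2 / 2) :
    (1 - q ^ 2 / (1 - q ^ 4)) * q ^ 2 ≤ 1 - q := by
  have s5 : Real.sqrt 5 ^ 2 = 5 := Real.sq_sqrt (by norm_num)
  have s5n : 0 ≤ Real.sqrt 5 := Real.sqrt_nonneg 5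
  have s2 : Real.sqrt 2 ^ 2 = 2 := Real.sq_sqrt (by norm_num)
  have s2n : 0 ≤ Real.sqrt 2 := Real.sqrt_nonneg 2
  have hs5 : (2.2 : ℝ) ≤ Real.sqrt 5 := by nlinarith
  have hs2 : Real.sqrt 2 ≤ 1.42 := by nlinarith
  have hq0 : (0.6 : ℝ) ≤ q := by linarith
  have hq1 : q ≤ 0.71 := by linarith
  have h4 : q ^ 4 ≤ 0.71 ^ 4 := by
    have := pow_le_pow_left₀ (by linarith : (0:ℝ) ≤ q) hq1 4
    linarith
  have hden : (0 : ℝ) < 1 - q ^ 4 := by nlinarith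
  rw [← mul_le_mul_iff_of_pos_right hden]
  have e : (1 - q ^ 2 / (1 - q ^ 4)) * q ^ 2 * (1 - q ^ 4)
      = (1 - q ^ 4 - q ^ 2) * q ^ 2 := by
    field_simp
  rw [e]
  nlinarith [sq_nonneg q, sq_nonneg (q - 0.6), sq_nonneg (q - 0.71),
    mul_nonneg (mul_nonneg (by linarith : (0:ℝ) ≤ q - 0.6) (by linarith : (0:ℝ) ≤ 0.71 - q)) (sq_nonneg q),
    mul_nonneg (mul_nonneg (by linarith : (0:ℝ) ≤ q - 0.6) (by linarith : (0:ℝ) ≤ 0.71 - q)) (mul_nonneg (sq_nonneg q) (by linarith : (0:ℝ) ≤ q)),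
    mul_nonneg (by linarith : (0:ℝ) ≤ q - 0.6) (by linarith : (0:ℝ) ≤ 0.71 - q),
    sq_nonneg (q^2 - 0.45), sq_nonneg (q^3 - 0.28)]
end

section
/- For q in the interval [(√5−1)/2, √2/2], the inequality 1 − q ≤ q²/(1−q⁴) holds. -/
theorem stmt_1 (q : ℝ) (h1 : (Real.sqrt 5 - 1) / 2 ≤ q) (h2 : q ≤ Real.sqrt 2 / 2) :
    1 - q ≤ q ^ 2 / (1 - q ^ 4) := by
  have h5 : Real.sqrt 5 ^ 2 = 5 := Real.sq_sqrt (by norm_num)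
  have h5pos : (1:ℝ) ≤ Real.sqrt 5 := by nlinarith [Real.sqrt_nonneg 5]
  have hq0 : 0 < q := lt_of_lt_of_le (by nlinarith) h1
  have hkey : 1 - q ≤ q ^ 2 := by nlinarith [Real.sqrt_nonneg 5]
  have h2' : Real.sqrt 2 ^ 2 = 2 := Real.sq_sqrt (by norm_num)
  have hlt1 : q < 1 := by nlinarith [Real.sqrt_nonneg 2]
  have hq2 : q ^ 2 ≤ 1/2 := by nlinarith [Real.sqrt_nonneg 2]
  have hden : 0 < 1 - q ^ 4 := by nlinarith [sq_nonneg (q^2)]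
  rw [le_div_iff₀ hden]
  nlinarith [sq_nonneg q, sq_nonneg (q^2)]
end

section
/- For all real β with 0° < β < 45° (in radians, 0 < β < π/4), the inequality β / ln(2 cos β) > tan β holds. -/
theorem stmt_3 (β : ℝ) (h1 : 0 < β) (h2 : β < Real.pi / 4) :
    β / Real.log (2 * Real.cos β) > Real.tan β := by
  have hpi := Real.pi_pos
  have hβ3 : β < Real.pi / 3 := by linarith
  have hc : 1 / 2 < Real.cos β := by
    have h := Real.cos_lt_cos_of_nonneg_of_le_pi (le_of_lt h1) (by linarith) hβ3
    rwa [Real.cos_pi_div_three] at h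
  have h2c : 1 < 2 * Real.cos β := by linarith
  have hL : 0 < Real.log (2 * Real.cos β) := Real.log_pos h2c
  have hLlt : Real.log (2 * Real.cos β) < 2 * Real.cos β - 1 :=
    Real.log_lt_sub_one_of_pos (by linarith) (by linarith)
  have hs : Real.sin β < β := Real.sin_lt h1
  have hc0 : 0 < Real.cos β := by linarith
  rw [Real.tan_eq_sin_div_cos, gt_iff_lt, div_lt_div_iff₀ hc0 hL]
  nlinarith [mul_lt_mul_of_pos_right hs hL, mul_lt_mul_of_pos_left hLlt h1,
    Real.cos_le_one β]
end

section
/- For all real q with 0.599 < q ≤ √2/2, the inequality √(4q²−1)·(1 − q² − q⁴ + q⁶) − 2(q² − q⁴ − q⁶) > 0 holds. -/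
theorem stmt_5 (q : ℝ) (h1 : (0.599 : ℝ) < q) (h2 : q ≤ Real.sqrt 2 / 2) :
    Real.sqrt (4 * q ^ 2 - 1) * (1 - q ^ 2 - q ^ 4 + q ^ 6)
      - 2 * (q ^ 2 - q ^ 4 - q ^ 6) > 0 := by
  have hq0 : (0:ℝ) < q := by linarith
  have hq2 : q ^ 2 ≤ 1/2 := by
    have h := pow_le_pow_left₀ hq0.le h2 2
    rw [div_pow, Real.sq_sqrt (by norm_num : (0:ℝ) ≤ 2)] at h
    linarith
  have ht1 : (0.358801 : ℝ) < q ^ 2 := by nlinarith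
  have hnn : (0:ℝ) ≤ 4 * q ^ 2 - 1 := by nlinarith
  have hs2 : Real.sqrt (4 * q ^ 2 - 1) ^ 2 = 4 * q ^ 2 - 1 := Real.sq_sqrt hnn
  have hs0 : (0:ℝ) ≤ Real.sqrt (4 * q ^ 2 - 1) := Real.sqrt_nonneg _
  set s := Real.sqrt (4 * q ^ 2 - 1) with hsdef
  have h1t : (0:ℝ) < 1 - q ^ 2 := by linarith
  have hA : (0:ℝ) < 1 - q ^ 2 - q ^ 4 + q ^ 6 := by nlinarith [mul_pos (mul_pos h1t h1t) (show (0:ℝ) < 1 + q ^ 2 by positivity)]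
  have ha : (0:ℝ) ≤ q ^ 2 - 0.358801 := by linarith
  have hb : (0:ℝ) ≤ 1/2 - q ^ 2 := by linarith
  have key : (2 * (q ^ 2 - q ^ 4 - q ^ 6)) ^ 2 < (s * (1 - q ^ 2 - q ^ 4 + q ^ 6)) ^ 2 := by
    rw [mul_pow, mul_pow, hs2]
    nlinarith [pow_pos (show (0:ℝ) < q ^ 2 - 0.358801 by linarith) 7,
      mul_nonneg (pow_nonneg ha 0) (pow_nonneg hb 7),
      mul_nonneg (pow_nonneg ha 1) (pow_nonneg hb 6),
      mul_nonneg (pow_nonneg ha 2) (pow_nonneg hb 5),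
      mul_nonneg (pow_nonneg ha 3) (pow_nonneg hb 4),
      mul_nonneg (pow_nonneg ha 4) (pow_nonneg hb 3),
      mul_nonneg (pow_nonneg ha 5) (pow_nonneg hb 2),
      mul_nonneg (pow_nonneg ha 6) (pow_nonneg hb 1)]
  have hfin := lt_of_pow_lt_pow_left₀ 2 (by positivity : (0:ℝ) ≤ s * (1 - q ^ 2 - q ^ 4 + q ^ 6)) key
  linarith
end

section
/- For all real q with 1/2 < q ≤ √2/2, setting β = arccos(1/(2q)) and α = π − 2β, the inequality 1 − q² − q⁴ − q^(4 + α/β) > 0 holds. -/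
theorem stmt_7 (q : ℝ) (h1 : (1 : ℝ) / 2 < q) (h2 : q ≤ Real.sqrt 2 / 2)
    (β α : ℝ) (hβ : β = Real.arccos (1 / (2 * q))) (hα : α = Real.pi - 2 * β) :
    1 - q ^ 2 - q ^ 4 - q ^ (4 + α / β) > 0 := by
  have hq0 : 0 < q := by linarith
  have hs2 : Real.sqrt 2 > 1 := by
    nlinarith [Real.sq_sqrt (by norm_num : (2:ℝ) ≥ 0), Real.sqrt_nonneg 2]
  have hq1 : q ≤ 1 := by
    calc q ≤ Real.sqrt 2 / 2 := h2
    _ ≤ 1 := by nlinarith [Real.sq_sqrt (by norm_num : (2:ℝ) ≥ 0), Real.sqrt_nonneg 2]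
  -- β ≤ π/4
  have hx1 : 1 / (2 * q) < 1 := by rw [div_lt_one (by linarith)]; linarith
  have hβpos : 0 < β := by rw [hβ]; exact Real.arccos_pos.2 hx1
  have hxge : Real.sqrt 2 / 2 ≤ 1 / (2 * q) := by
    rw [div_le_div_iff₀ (by norm_num) (by linarith)]
    nlinarith [Real.sq_sqrt (by norm_num : (2:ℝ) ≥ 0), Real.sqrt_nonneg 2]
  have hβle : β ≤ Real.pi / 4 := by
    rw [hβ]; exact Real.arccos_le_pi_div_four.2 hxge
  have hexp : (6 : ℝ) ≤ 4 + α / β := by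
    have : (2 : ℝ) ≤ α / β := by
      rw [le_div_iff₀ hβpos, hα]; linarith
    linarith
  have hle : q ^ (4 + α / β) ≤ q ^ (6 : ℝ) :=
    Real.rpow_le_rpow_of_exponent_ge hq0 hq1 hexp
  have h6 : q ^ (6 : ℝ) = q ^ (6 : ℕ) := by
    rw [← Real.rpow_natCast q 6]; norm_num
  have hq2 : q ^ 2 ≤ 1 / 2 := by
    nlinarith [Real.sq_sqrt (by norm_num : (2:ℝ) ≥ 0), Real.sqrt_nonneg 2]
  have : q ^ (6:ℕ) < 1 - q ^ 2 - q ^ 4 := by nlinarith [sq_nonneg q, pow_pos hq0 2, pow_pos hq0 4]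
  rw [h6] at hle
  linarith
end

section
/- For all real q with 1/2 < q < 0.69, setting β = arccos(1/(2q)) and α = π − 2β, the inequality (1/(1−q⁴))·q^((β + 2π − 2α)/β) < q − q² holds. -/
theorem stmt_10 (q : ℝ) (h1 : (1 : ℝ) / 2 < q) (h2 : q < (0.69 : ℝ))
    (β α : ℝ) (hβ : β = Real.arccos (1 / (2 * q))) (hα : α = Real.pi - 2 * β) :
    (1 / (1 - q ^ 4)) * q ^ ((β + 2 * Real.pi - 2 * α) / β) < q - q ^ 2 := by
  have hq0 : (0:ℝ) < q := by linarith
  have hβpos : 0 < β := by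
    rw [hβ]
    rw [Real.arccos_pos]
    rw [div_lt_one (by linarith)]
    linarith
  have hexp : (β + 2 * Real.pi - 2 * α) / β = 5 := by
    rw [hα]; field_simp; ring
  rw [hexp]
  have h5 : q ^ (5:ℝ) = q ^ (5:ℕ) := by
    rw [← Real.rpow_natCast q 5]; norm_num
  rw [h5]
  have hq4 : (0:ℝ) < 1 - q ^ 4 := by nlinarith [pow_lt_one₀ (le_of_lt hq0) (show q < 1 by linarith) (by norm_num : (4:ℕ) ≠ 0)]
  rw [one_div, inv_mul_eq_div, div_lt_iff₀ hq4]
  nlinarith [sq_nonneg q, sq_nonneg (q - 1/2), sq_nonneg (q*q - 1/2)]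
end

section
/- For all real q with 1/2 < q ≤ √2/2, all integers n ≥ 4 and all integers m with 2 ≤ m ≤ n−2, setting β = arccos(1/(2q)) and α = π − 2β, the inequality q^(n−m) − (1/(1−q⁴))·qⁿ·q⁴·q^(α/β) > qⁿ holds. -/
theorem stmt_12 (q : ℝ) (h1 : (1 : ℝ) / 2 < q) (h2 : q ≤ Real.sqrt 2 / 2)
    (n m : ℕ) (hn : 4 ≤ n) (hm : 2 ≤ m) (hmn : m ≤ n - 2)
    (β α : ℝ) (hβ : β = Real.arccos (1 / (2 * q))) (hα : α = Real.pi - 2 * β) :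
    q ^ (n - m) - (1 / (1 - q ^ 4)) * q ^ n * q ^ 4 * q ^ (α / β) > q ^ n := by
  have hs2 : Real.sqrt 2 ^ 2 = 2 := Real.sq_sqrt (by norm_num)
  have hsnn : 0 ≤ Real.sqrt 2 := Real.sqrt_nonneg 2
  have hq0 : 0 < q := lt_trans (by norm_num) h1
  have hq2 : q ^ 2 ≤ 1 / 2 := by nlinarith
  have hq1 : q < 1 := by nlinarith
  -- β bounds
  have hx1 : 1 / (2 * q) < 1 := by rw [div_lt_one (by linarith)]; linarith
  have hβ0 : 0 < β := by rw [hβ]; exact Real.arccos_pos.mpr hx1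
  have hxge : Real.sqrt 2 / 2 ≤ 1 / (2 * q) := by
    rw [div_le_div_iff₀ (by norm_num) (by linarith)]
    nlinarith
  have hβle : β ≤ Real.pi / 4 := by
    rw [hβ]
    exact Real.arccos_le_pi_div_four.mpr hxge
  have hexp : (2 : ℝ) ≤ α / β := by
    rw [le_div_iff₀ hβ0, hα]; linarith
  have hA : q ^ (α / β) ≤ q ^ (2 : ℝ) :=
    Real.rpow_le_rpow_of_exponent_ge hq0 hq1.le hexp
  have hA2 : q ^ (α / β) ≤ 1 / 2 := by
    calc q ^ (α / β) ≤ q ^ (2 : ℝ) := hA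
      _ = q ^ (2 : ℕ) := by rw [← Real.rpow_natCast q 2]; norm_num
      _ ≤ 1 / 2 := hq2
  have hA0 : 0 < q ^ (α / β) := Real.rpow_pos_of_pos hq0 _
  have hq4 : q ^ 4 ≤ 1 / 4 := by nlinarith
  have hq40 : 0 < q ^ 4 := by positivity
  have hD : (3 : ℝ) / 4 ≤ 1 - q ^ 4 := by linarith
  have hC : 1 / (1 - q ^ 4) ≤ 4 / 3 := by
    rw [div_le_div_iff₀ (by linarith) (by norm_num)]; linarith
  have hC0 : 0 < 1 / (1 - q ^ 4) := by positivity
  have hqn0 : 0 < q ^ n := by positivity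
  -- q^(n-m) ≥ 2 q^n
  have hmn' : m ≤ n := le_trans hmn (Nat.sub_le n 2)
  have hsplit : q ^ n = q ^ (n - m) * q ^ m := by
    rw [← pow_add, Nat.sub_add_cancel hmn']
  have hqm : q ^ m ≤ 1 / 2 := by
    calc q ^ m ≤ q ^ 2 := pow_le_pow_of_le_one hq0.le hq1.le hm
      _ ≤ 1 / 2 := hq2
  have hnm0 : 0 < q ^ (n - m) := by positivity
  have hbig : 2 * q ^ n ≤ q ^ (n - m) := by nlinarith
  have hterm : (1 / (1 - q ^ 4)) * q ^ n * q ^ 4 * q ^ (α / β) ≤ q ^ n / 6 := by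
    have h1' : (1 / (1 - q ^ 4)) * q ^ n * q ^ 4 * q ^ (α / β)
        ≤ (4 / 3) * q ^ n * (1 / 4) * (1 / 2) := by
      apply mul_le_mul (by apply mul_le_mul (by apply mul_le_mul hC le_rfl hqn0.le (by norm_num)) hq4 hq40.le (by positivity)) hA2 hA0.le (by positivity)
    linarith
  linarith
end

section
/- For all real q with 1/2 < q ≤ √2/2, setting β = arccos(1/(2q)) and α = π − 2β, the inequality (1/(1−q⁴))·q^((π − α)/β) < 1 − (1/(1−q⁴))·q^((π + β)/β) holds. -/
theorem stmt_13 (q : ℝ) (h1 : (1 : ℝ) / 2 < q) (h2 : q ≤ Real.sqrt 2 / 2)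
    (β α : ℝ) (hβ : β = Real.arccos (1 / (2 * q))) (hα : α = Real.pi - 2 * β) :
    (1 / (1 - q ^ 4)) * q ^ ((Real.pi - α) / β) <
      1 - (1 / (1 - q ^ 4)) * q ^ ((Real.pi + β) / β) := by
  have hs2 : Real.sqrt 2 ^ 2 = 2 := Real.sq_sqrt (by norm_num)
  have hs2nn : (0:ℝ) ≤ Real.sqrt 2 := Real.sqrt_nonneg 2
  have hs2lt : Real.sqrt 2 < 1.5 := by nlinarith
  have hq0 : 0 < q := by linarith
  have hq1 : q < 1 := by nlinarith
  have harg_lt : 1 / (2 * q) < 1 := by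
    rw [div_lt_one (by linarith)]; linarith
  have harg_ge : Real.sqrt 2 / 2 ≤ 1 / (2 * q) := by
    rw [div_le_div_iff₀ (by norm_num) (by linarith)]
    nlinarith
  have hβ0 : 0 < β := by rw [hβ]; exact Real.arccos_pos.mpr harg_lt
  have hβle : β ≤ Real.pi / 4 := by
    rw [hβ]; exact Real.arccos_le_pi_div_four.mpr harg_ge
  have hexp1 : (Real.pi - α) / β = 2 := by
    rw [hα]; field_simp; ring
  have hexp2 : (5:ℝ) ≤ (Real.pi + β) / β := by
    rw [le_div_iff₀ hβ0]; linarith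
  have hr1 : q ^ ((Real.pi - α) / β) = q ^ 2 := by
    rw [hexp1, show ((2:ℝ) = ((2:ℕ):ℝ)) by norm_num, Real.rpow_natCast]
  have hr2 : q ^ ((Real.pi + β) / β) ≤ q ^ 5 := by
    calc q ^ ((Real.pi + β) / β) ≤ q ^ (5:ℝ) :=
          Real.rpow_le_rpow_of_exponent_ge hq0 hq1.le hexp2
      _ = q ^ 5 := by
          rw [show ((5:ℝ) = ((5:ℕ):ℝ)) by norm_num, Real.rpow_natCast]
  have hden : 0 < 1 - q ^ 4 := by nlinarith [pow_lt_one₀ hq0.le hq1 (by norm_num : 4 ≠ 0)]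
  have hq2 : q ^ 2 ≤ 1 / 2 := by nlinarith
  have hq4 : q ^ 4 ≤ 1 / 4 := by nlinarith
  have hq5 : q ^ 5 ≤ 3 / 16 := by nlinarith [pow_pos hq0 4]
  have hkey : q ^ 2 + q ^ 4 + q ^ 5 < 1 := by linarith
  rw [hr1]
  have h5 : (1 / (1 - q ^ 4)) * q ^ ((Real.pi + β) / β) ≤ (1 / (1 - q ^ 4)) * q ^ 5 :=
    mul_le_mul_of_nonneg_left hr2 (by positivity)
  have hmain : (1 / (1 - q ^ 4)) * q ^ 2 < 1 - (1 / (1 - q ^ 4)) * q ^ 5 := by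
    rw [lt_sub_iff_add_lt, div_mul_eq_mul_div, div_mul_eq_mul_div, one_mul, one_mul,
      ← add_div, div_lt_one hden]
    linarith
  linarith
end

section
/- For all real q with 1/2 < q ≤ √2/2, setting β = arccos(1/(2q)) and α = π − 2β, the inequality (1/(1−q⁴))·q^((2π − α)/β) < q − (1/(1−q⁴))·q³ holds. -/
theorem stmt_14 (q : ℝ) (h1 : (1 : ℝ) / 2 < q) (h2 : q ≤ Real.sqrt 2 / 2)
    (β α : ℝ) (hβ : β = Real.arccos (1 / (2 * q))) (hα : α = Real.pi - 2 * β) :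
    (1 / (1 - q ^ 4)) * q ^ ((2 * Real.pi - α) / β) <
      q - (1 / (1 - q ^ 4)) * q ^ 3 := by
  have hs2 : (Real.sqrt 2) ^ 2 = 2 := Real.sq_sqrt (by norm_num)
  have hs2pos : (0:ℝ) < Real.sqrt 2 := Real.sqrt_pos.mpr (by norm_num)
  have hs : Real.sqrt 2 ≤ 1.42 := by nlinarith
  have hq0 : 0 < q := lt_trans (by norm_num) h1
  have hq1 : q < 1 := by nlinarith
  have hx1 : 1 / (2 * q) < 1 := by
    rw [div_lt_one (by linarith)]; linarith
  have hβpos : 0 < β := by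
    rw [hβ]; exact Real.arccos_pos.mpr hx1
  have hx2 : Real.sqrt 2 / 2 ≤ 1 / (2 * q) := by
    rw [le_div_iff₀ (by linarith)]
    nlinarith
  have hβle : β ≤ Real.pi / 4 := by
    rw [hβ]; exact Real.arccos_le_pi_div_four.mpr hx2
  have hexp : (6:ℝ) ≤ (2 * Real.pi - α) / β := by
    rw [hα, le_div_iff₀ hβpos]
    linarith
  have hpow : q ^ ((2 * Real.pi - α) / β) ≤ q ^ (6:ℝ) :=
    Real.rpow_le_rpow_of_exponent_ge hq0 hq1.le hexp
  have h6 : q ^ (6:ℝ) = q ^ (6:ℕ) := by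
    rw [← Real.rpow_natCast q 6]; norm_num
  have h1q4 : 0 < 1 - q ^ 4 := by nlinarith [pow_lt_one₀ hq0.le hq1 (by norm_num : (4:ℕ) ≠ 0)]
  have hfrac : 0 < 1 / (1 - q ^ 4) := by positivity
  have hq : q ≤ 0.71 := by nlinarith
  have hq2 : q ^ 2 ≤ 1 / 2 := by nlinarith
  have hq4 : q ^ 4 ≤ 1 / 4 := by nlinarith
  have hq5 : q ^ 5 ≤ 0.71 / 4 := by nlinarith
  have hsum : q ^ 4 + q ^ 5 + q ^ 2 < 1 := by linarith
  have poly : q ^ 6 + q ^ 3 < q * (1 - q ^ 4) := by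
    nlinarith [mul_lt_mul_of_pos_left hsum hq0]
  have key : (1 / (1 - q ^ 4)) * q ^ (6:ℕ) < q - (1 / (1 - q ^ 4)) * q ^ 3 := by
    rw [div_mul_eq_mul_div, div_mul_eq_mul_div, one_mul, one_mul,
      div_lt_iff₀ h1q4, sub_mul, div_mul_cancel₀ _ (ne_of_gt h1q4)]
    linarith
  calc (1 / (1 - q ^ 4)) * q ^ ((2 * Real.pi - α) / β)
      ≤ (1 / (1 - q ^ 4)) * q ^ (6:ℕ) := by
        rw [← h6]; exact mul_le_mul_of_nonneg_left hpow hfrac.le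
    _ < q - (1 / (1 - q ^ 4)) * q ^ 3 := key
end

section
/- For all real q with 1/2 < q < 0.68, setting β = arccos(1/(2q)) and α = π − 2β, the inequality (1/(1−q⁴))·q^((β + 2π − 2α)/β) < q² − (1/(1−q⁴))·q⁴ holds. -/
theorem stmt_15 (q : ℝ) (h1 : (1 : ℝ) / 2 < q) (h2 : q < (0.68 : ℝ))
    (β α : ℝ) (hβ : β = Real.arccos (1 / (2 * q))) (hα : α = Real.pi - 2 * β) :
    (1 / (1 - q ^ 4)) * q ^ ((β + 2 * Real.pi - 2 * α) / β) <
      q ^ 2 - (1 / (1 - q ^ 4)) * q ^ 4 := by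
  have hq0 : 0 < q := by linarith
  have hβpos : 0 < β := by
    rw [hβ, Real.arccos_pos, div_lt_one (by linarith)]
    linarith
  have hexp : (β + 2 * Real.pi - 2 * α) / β = 5 := by
    rw [hα]
    field_simp
    ring
  have hrw : q ^ ((β + 2 * Real.pi - 2 * α) / β) = q ^ (5 : ℕ) := by
    rw [hexp, show (5 : ℝ) = ((5 : ℕ) : ℝ) by norm_num, Real.rpow_natCast]
  rw [hrw]
  have hq1 : q < 1 := by linarith
  have h4 : 0 < 1 - q ^ 4 := by nlinarith [pow_lt_one₀ hq0.le hq1 (by norm_num : (4:ℕ) ≠ 0)]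
  have key : (q ^ 5 + q ^ 4) / (1 - q ^ 4) < q ^ 2 := by
    rw [div_lt_iff₀ h4]
    nlinarith [pow_pos hq0 2, pow_pos hq0 3, pow_pos hq0 4,
      mul_pos (pow_pos hq0 2) (sub_pos.2 h2), mul_pos (pow_pos hq0 3) (sub_pos.2 h2),
      mul_pos (pow_pos hq0 4) (sub_pos.2 h2)]
  have hsum : 1 / (1 - q ^ 4) * q ^ (5:ℕ) + 1 / (1 - q ^ 4) * q ^ 4
      = (q ^ 5 + q ^ 4) / (1 - q ^ 4) := by ring
  linarith
end

section
/- For all real q with 1/2 < q < 0.69, setting β = arccos(1/(2q)) and α = π − 2β, the inequality (1/(1−q⁴))·q⁴ < 1 − q² − (1/(1−q⁴))·q^((π + β)/β) holds. -/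
theorem stmt_16 (q : ℝ) (h1 : (1 : ℝ) / 2 < q) (h2 : q < (0.69 : ℝ))
    (β α : ℝ) (hβ : β = Real.arccos (1 / (2 * q))) (hα : α = Real.pi - 2 * β) :
    (1 / (1 - q ^ 4)) * q ^ 4 <
      1 - q ^ 2 - (1 / (1 - q ^ 4)) * q ^ ((Real.pi + β) / β) := by
  have hq0 : (0:ℝ) < q := by linarith
  have hq1 : q < 1 := by norm_num at h2 ⊢; linarith
  have hx1 : 1 / (2 * q) < 1 := by
    rw [div_lt_one (by linarith)]; linarith
  have hβpos : 0 < β := by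
    rw [hβ, Real.arccos_pos]; exact hx1
  -- β < π/4
  have hs2 : Real.sqrt 2 ^ 2 = 2 := Real.sq_sqrt (by norm_num)
  have hs2pos : 0 < Real.sqrt 2 := Real.sqrt_pos.mpr (by norm_num)
  have hxgt : Real.sqrt 2 / 2 < 1 / (2 * q) := by
    rw [div_lt_div_iff₀ (by norm_num) (by linarith)]
    nlinarith [hs2, hs2pos]
  have hpi4 : Real.arccos (Real.sqrt 2 / 2) = Real.pi / 4 := by
    rw [← Real.cos_pi_div_four, Real.arccos_cos (by positivity)
      (by linarith [Real.pi_pos])]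
  have hβlt : β < Real.pi / 4 := by
    rw [hβ, ← hpi4]
    refine Real.strictAntiOn_arccos ?_ ?_ hxgt
    · constructor
      · nlinarith [hs2pos]
      · nlinarith [hs2, hs2pos]
    · constructor
      · linarith
      · linarith
  -- exponent > 5
  have hexp : (5:ℝ) < (Real.pi + β) / β := by
    rw [lt_div_iff₀ hβpos]
    linarith
  have hrpow : q ^ ((Real.pi + β) / β) < q ^ (5:ℕ) := by
    calc q ^ ((Real.pi + β) / β) < q ^ (5:ℝ) :=
          Real.rpow_lt_rpow_of_exponent_gt hq0 hq1 hexp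
      _ = q ^ (5:ℕ) := by
          rw [show ((5:ℝ)) = ((5:ℕ):ℝ) by norm_num, Real.rpow_natCast]
  have h4 : (0:ℝ) < 1 - q ^ 4 := by nlinarith [pow_lt_one₀ (le_of_lt hq0) hq1 (by norm_num : 4 ≠ 0)]
  have hA : (0:ℝ) < 1 / (1 - q ^ 4) := by positivity
  have key : (1 / (1 - q ^ 4)) * q ^ 4 < 1 - q ^ 2 - (1 / (1 - q ^ 4)) * q ^ (5:ℕ) := by
    rw [div_mul_eq_mul_div, div_mul_eq_mul_div, one_mul, one_mul, div_lt_iff₀ h4,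
      sub_mul, sub_mul, div_mul_cancel₀ _ (ne_of_gt h4)]
    have h2' : q ≤ 69/100 := by norm_num at h2; linarith
    nlinarith [mul_nonneg (mul_nonneg (sub_nonneg.mpr h2') hq0.le) hq0.le,
      mul_nonneg (mul_nonneg (mul_nonneg (sub_nonneg.mpr h2') hq0.le) hq0.le) hq0.le,
      mul_nonneg (mul_nonneg (mul_nonneg (mul_nonneg (sub_nonneg.mpr h2') hq0.le) hq0.le) hq0.le) hq0.le,
      mul_nonneg (mul_nonneg (mul_nonneg (mul_nonneg (mul_nonneg (sub_nonneg.mpr h2') hq0.le) hq0.le) hq0.le) hq0.le) hq0.le,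
      sq_nonneg (q - 69/100), hq0, h2']
  nlinarith [mul_lt_mul_of_pos_left hrpow hA]
end

section
/- For q = 0.6715462 (corresponding to unfolding angle α ≈ 96.241°), setting β = arccos(1/(2q)) and α = π − 2β, the inequality (q³/(1−q⁴))·(q^(α/β) + q²) < 2(cos β + cos 3β) holds, while it fails for q = 0.6715514 (α ≈ 96.240°). -/
private lemma cosUB {x u : ℝ} (hx0 : 0 ≤ x) (hx1 : x ≤ 1)
    (h2 : 1 - x ^ 2 / 2 + x ^ 4 * (5 / 96) ≤ u) : Real.cos x ≤ u := by
  have hab : |x| = x := abs_of_nonneg hx0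
  have h := abs_le.1 (Real.cos_bound (by rwa [hab]))
  rw [hab] at h
  linarith [h.1, h.2]

private lemma cosLB {x l : ℝ} (hx0 : 0 ≤ x) (hx1 : x ≤ 1)
    (h2 : l ≤ 1 - x ^ 2 / 2 - x ^ 4 * (5 / 96)) : l ≤ Real.cos x := by
  have hab : |x| = x := abs_of_nonneg hx0
  have h := abs_le.1 (Real.cos_bound (by rwa [hab]))
  rw [hab] at h
  linarith [h.1, h.2]

private lemma stepUB {x u H : ℝ} (h12 : 1 / 2 ≤ Real.cos x) (hc : Real.cos x ≤ u)
    (hH : 4 * u ^ 3 - 3 * u ≤ H) : Real.cos (3 * x) ≤ H := by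
  rw [Real.cos_three_mul]
  have h1 : 0 ≤ u - Real.cos x := by linarith
  have h2 : 0 ≤ 4 * (u ^ 2 + u * Real.cos x + Real.cos x ^ 2) - 3 := by
    nlinarith [mul_nonneg (by linarith : (0:ℝ) ≤ u - 1 / 2)
      (by linarith : (0:ℝ) ≤ Real.cos x - 1 / 2), sq_nonneg (u - 1 / 2),
      sq_nonneg (Real.cos x - 1 / 2)]
  nlinarith [mul_nonneg h1 h2]

private lemma stepLB {x l L : ℝ} (h12 : 1 / 2 ≤ l) (hc : l ≤ Real.cos x)
    (hH : L ≤ 4 * l ^ 3 - 3 * l) : L ≤ Real.cos (3 * x) := by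
  rw [Real.cos_three_mul]
  have h1 : 0 ≤ Real.cos x - l := by linarith
  have h2 : 0 ≤ 4 * (Real.cos x ^ 2 + Real.cos x * l + l ^ 2) - 3 := by
    nlinarith [mul_nonneg (by linarith : (0:ℝ) ≤ Real.cos x - 1 / 2)
      (by linarith : (0:ℝ) ≤ l - 1 / 2), sq_nonneg (Real.cos x - 1 / 2),
      sq_nonneg (l - 1 / 2)]
  nlinarith [mul_nonneg h1 h2]

theorem stmt_17 :
    (∀ q β α : ℝ, q = (0.6715462 : ℝ) → β = Real.arccos (1 / (2 * q)) →
      α = Real.pi - 2 * β →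
      (q ^ 3 / (1 - q ^ 4)) * (q ^ (α / β) + q ^ 2) < 2 * (Real.cos β + Real.cos (3 * β))) ∧
    (∀ q β α : ℝ, q = (0.6715514 : ℝ) → β = Real.arccos (1 / (2 * q)) →
      α = Real.pi - 2 * β →
      ¬ ((q ^ 3 / (1 - q ^ 4)) * (q ^ (α / β) + q ^ 2) <
          2 * (Real.cos β + Real.cos (3 * β)))) := by
  constructor
  · intro q β α hq hβ hα
    subst hq; subst hα
    set B := Real.arccos (1 / (2 * (0.6715462:ℝ))) with hBdef
    subst hβ
    have hC : Real.cos B = 1 / (2 * (0.6715462:ℝ)) :=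
      Real.cos_arccos (by norm_num) (by norm_num)
    have hB0 : 0 < B := Real.arccos_pos.2 (by norm_num)
    have hBpi : B ≤ Real.pi := Real.arccos_le_pi _
    -- chain of cosine upper bounds at 0.7309450 = 3^4 * r with r = 730945/81000000
    have hcr : Real.cos ((730945:ℝ) / 81000000) ≤ 99995928394597277 / 100000000000000000 :=
      cosUB (by norm_num) (by norm_num) (by norm_num)
    have hh0 : (1:ℝ) / 2 ≤ Real.cos ((730945:ℝ) / 81000000) :=
      cosLB (by norm_num) (by norm_num) (by norm_num)
    have hc1 : Real.cos (3 * ((730945:ℝ) / 81000000)) ≤ 99963357540704961 / 100000000000000000 :=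
      stepUB hh0 hcr (by norm_num)
    have hh1 : (1:ℝ) / 2 ≤ Real.cos (3 * ((730945:ℝ) / 81000000)) :=
      cosLB (by norm_num) (by norm_num) (by norm_num)
    have hc2 : Real.cos (3 * (3 * ((730945:ℝ) / 81000000))) ≤ 49835189483521971 / 50000000000000000 :=
      stepUB hh1 hc1 (by norm_num)
    have hh2 : (1:ℝ) / 2 ≤ Real.cos (3 * (3 * ((730945:ℝ) / 81000000))) :=
      cosLB (by norm_num) (by norm_num) (by norm_num)
    have hc3 : Real.cos (3 * (3 * (3 * ((730945:ℝ) / 81000000)))) ≤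
        24261608595276521 / 25000000000000000 :=
      stepUB hh2 hc2 (by norm_num)
    have hh3 : (1:ℝ) / 2 ≤ Real.cos (3 * (3 * (3 * ((730945:ℝ) / 81000000)))) :=
      cosLB (by norm_num) (by norm_num) (by norm_num)
    have hc4 : Real.cos (3 * (3 * (3 * (3 * ((730945:ℝ) / 81000000))))) ≤
        744544291829857 / 1000000000000000 :=
      stepUB hh3 hc3 (by norm_num)
    have hhi : Real.cos ((0.7309450:ℝ)) < 1 / (2 * (0.6715462:ℝ)) := by
      rw [show (0.7309450:ℝ) = 3 * (3 * (3 * (3 * ((730945:ℝ) / 81000000)))) by norm_num]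
      refine lt_of_le_of_lt hc4 (by norm_num)
    have hBlt : B < 0.7309450 := by
      by_contra h
      push_neg at h
      have h2 := Real.cos_le_cos_of_nonneg_of_le_pi
        (by norm_num : (0:ℝ) ≤ 0.7309450) hBpi h
      rw [hC] at h2
      linarith
    -- exponent lower bound
    have hs : ((11489:ℝ) / 5000) ≤ (Real.pi - 2 * B) / B := by
      rw [le_div_iff₀ hB0]
      have h1 : ((11489:ℝ) / 5000 + 2) * B ≤ ((11489:ℝ) / 5000 + 2) * 0.7309450 := by
        nlinarith [hBlt]
      have h2 : ((11489:ℝ) / 5000 + 2) * (0.7309450:ℝ) ≤ 3.14159265358979323846 := by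
        norm_num
      have h3 := Real.pi_gt_d20
      linarith
    have hrpow : (0.6715462:ℝ) ^ ((Real.pi - 2 * B) / B) ≤
        (0.6715462:ℝ) ^ ((11489:ℝ) / 5000) :=
      Real.rpow_le_rpow_of_exponent_ge (by norm_num) (by norm_num) hs
    have hBnd : (0.6715462:ℝ) ^ ((11489:ℝ) / 5000) ≤ 400548397 / 1000000000 := by
      have key : ((0.6715462:ℝ) ^ ((11489:ℝ) / 5000)) ^ (5000:ℕ) =
          (0.6715462:ℝ) ^ (11489:ℕ) := by
        rw [← Real.rpow_natCast ((0.6715462:ℝ) ^ ((11489:ℝ) / 5000)) 5000,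
          ← Real.rpow_mul (by norm_num : (0:ℝ) ≤ 0.6715462)]
        rw [show ((11489:ℝ) / 5000) * ((5000:ℕ):ℝ) = ((11489:ℕ):ℝ) by push_cast; ring]
        exact Real.rpow_natCast _ _
      refine le_of_pow_le_pow_left₀ (n := 5000) (by norm_num) (by norm_num) ?_
      rw [key]
      norm_num
      rw [div_pow, div_pow, div_le_div_iff₀ (by positivity) (by positivity)]
      have hN : (3357731:ℕ) ^ 11489 * 1000000000 ^ 5000 ≤ 400548397 ^ 5000 * 5000000 ^ 11489 := by decide +kernel
      have hR := (Nat.cast_le (α := ℝ)).mpr hN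
      simp only [Nat.cast_mul, Nat.cast_pow, Nat.cast_ofNat] at hR
      exact hR
    have hqB : (0.6715462:ℝ) ^ ((Real.pi - 2 * B) / B) ≤ 400548397 / 1000000000 :=
      hrpow.trans hBnd
    calc (0.6715462:ℝ) ^ 3 / (1 - 0.6715462 ^ 4) *
          ((0.6715462:ℝ) ^ ((Real.pi - 2 * B) / B) + 0.6715462 ^ 2)
        ≤ (0.6715462:ℝ) ^ 3 / (1 - 0.6715462 ^ 4) *
          ((400548397:ℝ) / 1000000000 + 0.6715462 ^ 2) :=
          mul_le_mul_of_nonneg_left (add_le_add hqB le_rfl) (by norm_num)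
      _ < 2 * (Real.cos B + Real.cos (3 * B)) := by
          rw [Real.cos_three_mul, hC]
          norm_num
  · intro q β α hq hβ hα
    subst hq; subst hα
    set B := Real.arccos (1 / (2 * (0.6715514:ℝ))) with hBdef
    subst hβ
    rw [not_lt]
    have hC : Real.cos B = 1 / (2 * (0.6715514:ℝ)) :=
      Real.cos_arccos (by norm_num) (by norm_num)
    have hB0 : 0 < B := Real.arccos_pos.2 (by norm_num)
    have hBnn : 0 ≤ B := le_of_lt hB0
    -- chain of cosine lower bounds at 0.7309380 = 3^4 * r with r = 7309380/810000000
    have hcr : (24998982100876867:ℝ) / 25000000000000000 ≤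
        Real.cos ((7309380:ℝ) / 810000000) :=
      cosLB (by norm_num) (by norm_num) (by norm_num)
    have hl1 : (24990839405221993:ℝ) / 25000000000000000 ≤
        Real.cos (3 * ((7309380:ℝ) / 810000000)) :=
      stepLB (by norm_num) hcr (by norm_num)
    have hl2 : (49835189843993013:ℝ) / 50000000000000000 ≤
        Real.cos (3 * (3 * ((7309380:ℝ) / 810000000))) :=
      stepLB (by norm_num) hl1 (by norm_num)
    have hl3 : (3032701275395183:ℝ) / 3125000000000000 ≤
        Real.cos (3 * (3 * (3 * ((7309380:ℝ) / 810000000)))) :=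
      stepLB (by norm_num) hl2 (by norm_num)
    have hl4 : (37227241287570777:ℝ) / 50000000000000000 ≤
        Real.cos (3 * (3 * (3 * (3 * ((7309380:ℝ) / 810000000))))) :=
      stepLB (by norm_num) hl3 (by norm_num)
    have hlo : 1 / (2 * (0.6715514:ℝ)) < Real.cos ((0.7309380:ℝ)) := by
      rw [show (0.7309380:ℝ) = 3 * (3 * (3 * (3 * ((7309380:ℝ) / 810000000)))) by norm_num]
      refine lt_of_lt_of_le (by norm_num) hl4
    have hBgt : (0.7309380:ℝ) < B := by
      by_contra h
      push_neg at h
      have hpi : (0.7309380:ℝ) ≤ Real.pi := by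
        have := Real.pi_gt_three
        linarith
      have h2 := Real.cos_le_cos_of_nonneg_of_le_pi hBnn hpi h
      rw [hC] at h2
      linarith
    -- exponent upper bound
    have hs : (Real.pi - 2 * B) / B ≤ (28726:ℝ) / 12500 := by
      rw [div_le_iff₀ hB0]
      have h1 : ((28726:ℝ) / 12500 + 2) * 0.7309380 ≤ ((28726:ℝ) / 12500 + 2) * B := by
        nlinarith [hBgt]
      have h2 : (3.14159265358979323847:ℝ) ≤ ((28726:ℝ) / 12500 + 2) * (0.7309380:ℝ) := by
        norm_num
      have h3 := Real.pi_lt_d20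
      linarith
    have hrpow : (0.6715514:ℝ) ^ ((28726:ℝ) / 12500) ≤
        (0.6715514:ℝ) ^ ((Real.pi - 2 * B) / B) :=
      Real.rpow_le_rpow_of_exponent_ge (by norm_num) (by norm_num) hs
    have hBnd : (200255431:ℝ) / 500000000 ≤ (0.6715514:ℝ) ^ ((28726:ℝ) / 12500) := by
      have key : ((0.6715514:ℝ) ^ ((28726:ℝ) / 12500)) ^ (12500:ℕ) =
          (0.6715514:ℝ) ^ (28726:ℕ) := by
        rw [← Real.rpow_natCast ((0.6715514:ℝ) ^ ((28726:ℝ) / 12500)) 12500,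
          ← Real.rpow_mul (by norm_num : (0:ℝ) ≤ 0.6715514)]
        rw [show ((28726:ℝ) / 12500) * ((12500:ℕ):ℝ) = ((28726:ℕ):ℝ) by push_cast; ring]
        exact Real.rpow_natCast _ _
      refine le_of_pow_le_pow_left₀ (n := 12500) (by norm_num)
        (Real.rpow_nonneg (by norm_num) _) ?_
      rw [key]
      norm_num
      rw [div_pow, div_pow, div_le_div_iff₀ (by positivity) (by positivity)]
      have hN : (200255431:ℕ) ^ 12500 * 5000000 ^ 28726 ≤ 3357757 ^ 28726 * 500000000 ^ 12500 := by decide +kernel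
      have hR := (Nat.cast_le (α := ℝ)).mpr hN
      simp only [Nat.cast_mul, Nat.cast_pow, Nat.cast_ofNat] at hR
      exact hR
    have hqB : (200255431:ℝ) / 500000000 ≤ (0.6715514:ℝ) ^ ((Real.pi - 2 * B) / B) :=
      hBnd.trans hrpow
    calc 2 * (Real.cos B + Real.cos (3 * B))
        ≤ (0.6715514:ℝ) ^ 3 / (1 - 0.6715514 ^ 4) *
          ((200255431:ℝ) / 500000000 + 0.6715514 ^ 2) := by
          rw [Real.cos_three_mul, hC]
          norm_num
      _ ≤ (0.6715514:ℝ) ^ 3 / (1 - 0.6715514 ^ 4) *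
          ((0.6715514:ℝ) ^ ((Real.pi - 2 * B) / B) + 0.6715514 ^ 2) :=
          mul_le_mul_of_nonneg_left (add_le_add hqB le_rfl) (by norm_num)
end

section
/- Let q ∈ (1/2, √2/2], β = arccos(1/(2q)). In a polar coordinate system centered at a point C, with a second center C' at distance q from C along the polar axis, consider the spirals a₀(φ) = (1/(1−q⁴))·q^(−φ/β) centered at C and e₀'(φ) = (1/(1−q⁴))·q^(−(φ−4β)/β) centered at C'. Then the dilation with center A = the point of a₀ at polar angle −β, and scaling factor q⁴, maps C to C' and maps each point of a₀ to the corresponding point of e₀' at the same polar angle. -/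
/-- The dilation of center `A` (point of the spiral `a₀` at polar angle `-β`)
and factor `q⁴` maps the center `C` (the origin) to the second center `C'`
(at distance `q` from `C`, in the direction of polar angle `-β`), and maps
each point of the spiral `a₀` to the point of `e₀'` at the same polar angle. -/
theorem stmt_19 (q : ℝ) (h1 : (1 : ℝ) / 2 < q) (h2 : q ≤ Real.sqrt 2 / 2)
    (β : ℝ) (hβ : β = Real.arccos (1 / (2 * q)))
    (u : ℝ → ℝ × ℝ) (hu : ∀ φ, u φ = (Real.cos φ, Real.sin φ))
    (a₀ e₀' : ℝ → ℝ) (ha : ∀ φ, a₀ φ = (1 / (1 - q ^ 4)) * q ^ (-(φ / β)))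
    (he : ∀ φ, e₀' φ = (1 / (1 - q ^ 4)) * q ^ (-((φ - 4 * β) / β)))
    (C C' A : ℝ × ℝ) (hC : C = 0) (hC' : C' = q • u (-β)) (hA : A = a₀ (-β) • u (-β))
    (D : ℝ × ℝ → ℝ × ℝ) (hD : ∀ x, D x = A + (q ^ 4 : ℝ) • (x - A)) :
    D C = C' ∧ ∀ φ : ℝ, D (C + a₀ φ • u φ) = C' + e₀' φ • u φ := by
  have hq0 : 0 < q := lt_trans (by norm_num) h1
  have hβpos : 0 < β := by
    rw [hβ]
    apply Real.arccos_pos.mpr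
    rw [div_lt_one (by linarith)]
    linarith
  have hβne : β ≠ 0 := ne_of_gt hβpos
  -- a₀ (-β) = q / (1 - q^4)
  have haβ : a₀ (-β) = q / (1 - q ^ 4) := by
    rw [ha]
    rw [show -(-β / β) = (1 : ℝ) by field_simp]
    rw [Real.rpow_one]
    ring
  -- e₀' φ = q^4 * a₀ φ
  have hkey : ∀ φ, e₀' φ = q ^ 4 * a₀ φ := by
    intro φ
    rw [he, ha]
    rw [show -((φ - 4 * β) / β) = (4 : ℝ) + -(φ / β) by field_simp; ring]
    rw [Real.rpow_add hq0, show (4:ℝ) = ((4:ℕ):ℝ) by norm_num, Real.rpow_natCast]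
    ring
  -- (1 - q^4) • A = C'
  have hAC : ((1 : ℝ) - q ^ 4) • A = C' := by
    rw [hA, hC', haβ, smul_smul]
    congr 1
    have h4 : (1 : ℝ) - q ^ 4 ≠ 0 := by
      have hq1 : q < 1 := lt_of_le_of_lt h2 (by
        nlinarith [Real.sq_sqrt (by norm_num : (2:ℝ) ≥ 0), Real.sqrt_nonneg 2,
          Real.sqrt_lt_sqrt (by norm_num : (0:ℝ) ≤ 2) (by norm_num : (2:ℝ) < 4)])
      have : q ^ 4 < 1 := pow_lt_one₀ hq0.le hq1 (by norm_num)
      linarith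
    field_simp
  constructor
  · rw [hD, hC, ← hAC]
    module
  · intro φ
    rw [hD, hC, hkey, ← hAC]
    module
end
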